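/- arXiv:math/0008063 — 4 statements merged into one kernel-verified Lean document; each statement's English description precedes it below -/
import Mathlib

section
/- Let $F = \{f_1,\dots,f_N\}$ be a finite set of contractions on a complete metric space $X$, each with Lipschitz constant at most $r < 1$. Then there is a unique nonempty compact set $W \subseteq X$ with $W = \bigcup_{i=1}^N f_i(W)$, and for any nonempty compact $Z \subseteq X$ the iterates of the union map applied to $Z$ converge to $W$ in the Hausdorff metric. -/
open TopologicalSpace Filter Set

/-- The union map of a finite iterated function system, sending a nonempty compact set `U`
to `⋃ i, f i '' U`. -/
noncomputable def finiteUnionMap {X : Type*} [MetricSpace X] {N : ℕ} (hN : 0 < N)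
    (f : Fin N → X → X) (hc : ∀ i, Continuous (f i))
    (U : NonemptyCompacts X) : NonemptyCompacts X :=
  ⟨⟨⋃ i, f i '' (U : Set X),
     isCompact_iUnion fun i => U.isCompact.image (hc i)⟩, by
    obtain ⟨x, hx⟩ := U.nonempty
    exact ⟨f ⟨0, hN⟩ x, Set.mem_iUnion.2 ⟨⟨0, hN⟩, Set.mem_image_of_mem _ hx⟩⟩⟩

/-- Hutchinson's contraction principle, finite case:
a finite family of contractions with uniform Lipschitz bound `r < 1` on a complete
metric space has a unique nonempty compact attractor `W = ⋃ i, f i '' W`, and for any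
nonempty compact `Z` the iterates of the union map applied to `Z` converge to `W`
in the Hausdorff metric. -/
theorem hutchinson_finite
    {X : Type*} [MetricSpace X] [CompleteSpace X] [Nonempty X]
    {N : ℕ} (hN : 0 < N) (f : Fin N → X → X)
    (r : NNReal) (hr : r < 1) (hf : ∀ i, LipschitzWith r (f i)) :
    ∃ W : NonemptyCompacts X,
      ((W : Set X) = ⋃ i, f i '' (W : Set X)) ∧
      (∀ W' : NonemptyCompacts X,
        (W' : Set X) = ⋃ i, f i '' (W' : Set X) → W' = W) ∧
      (∀ Z : NonemptyCompacts X,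
        Tendsto (fun n => (finiteUnionMap hN f (fun i => (hf i).continuous))^[n] Z)
          atTop (nhds W)) := by
  set F := finiteUnionMap hN f (fun i => (hf i).continuous) with hF
  have hedist : ∀ S T : NonemptyCompacts X, edist S T = EMetric.hausdorffEdist (S : Set X) T :=
    fun _ _ => rfl
  have hlip : LipschitzWith r F := by
    intro S T
    rw [hedist, hedist]
    have key : ∀ S T : NonemptyCompacts X, ∀ x ∈ (F S : Set X),
        ∃ y ∈ (F T : Set X), edist x y ≤ r * EMetric.hausdorffEdist (S : Set X) (T : Set X) := by
      intro S T x hx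
      obtain ⟨i, a, ha, rfl⟩ := Set.mem_iUnion.1 hx
      obtain ⟨b, hb, hab⟩ := T.isCompact.exists_infEdist_eq_edist T.nonempty a
      refine ⟨f i b, Set.mem_iUnion.2 ⟨i, Set.mem_image_of_mem _ hb⟩, ?_⟩
      calc edist (f i a) (f i b) ≤ r * edist a b := hf i a b
        _ ≤ r * EMetric.hausdorffEdist (S : Set X) (T : Set X) := by
            gcongr
            rw [← hab]
            exact EMetric.infEdist_le_hausdorffEdist_of_mem ha
    refine EMetric.hausdorffEdist_le_of_mem_edist (key S T) (fun x hx => ?_)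
    obtain ⟨y, hy, h⟩ := key T S x hx
    exact ⟨y, hy, h.trans (by rw [show EMetric.hausdorffEdist (T : Set X) (S : Set X) = EMetric.hausdorffEdist (S : Set X) (T : Set X) from Metric.hausdorffEDist_comm])⟩
  have hc : ContractingWith r F := ⟨hr, hlip⟩
  have : Nonempty (NonemptyCompacts X) := by
    obtain ⟨x⟩ := ‹Nonempty X›
    exact ⟨⟨⟨{x}, isCompact_singleton⟩, Set.singleton_nonempty x⟩⟩
  refine ⟨hc.fixedPoint F, ?_, fun W' hW' => ?_, fun Z => hc.tendsto_iterate_fixedPoint Z⟩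
  · have := hc.fixedPoint_isFixedPt
    unfold Function.IsFixedPt at this
    conv_lhs => rw [← this]
    rfl
  · exact hc.fixedPoint_unique (NonemptyCompacts.ext hW'.symm)
end

section
/- Let $G$ be a compact subset of $C(X,Y)$ (compact-open topology) consisting of Lipschitz maps between complete metric spaces $X$ and $Y$, with a uniform Lipschitz bound $r$. Then the union map $U \mapsto \bigcup_{g\in G} g(U)$ maps nonempty compact subsets of $X$ to nonempty compact subsets of $Y$ and is Lipschitz with constant at most $r$ with respect to the Hausdorff metrics. -/
open TopologicalSpace

open Set EMetric in
private lemma union_map_infEdist_bound {X Y : Type*} [MetricSpace X] [MetricSpace Y]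
    (G : Set C(X, Y)) (r : NNReal) (hLip : ∀ g ∈ G, LipschitzWith r (g : X → Y))
    (U V : NonemptyCompacts X) :
    ∀ y ∈ ⋃ g ∈ G, (g : X → Y) '' (U : Set X),
      infEdist y (⋃ g ∈ G, (g : X → Y) '' (V : Set X)) ≤
        r * hausdorffEdist (U : Set X) (V : Set X) := by
  rintro y hy
  simp only [mem_iUnion] at hy
  obtain ⟨g, hg, u, hu, rfl⟩ := hy
  obtain ⟨v, hv, hvd⟩ := V.isCompact.exists_infEdist_eq_edist V.nonempty u
  have h1 : infEdist (g u) (⋃ g ∈ G, (g : X → Y) '' (V : Set X)) ≤ edist (g u) (g v) :=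
    infEdist_le_edist_of_mem (by simp only [mem_iUnion]; exact ⟨g, hg, v, hv, rfl⟩)
  calc infEdist (g u) (⋃ g ∈ G, (g : X → Y) '' (V : Set X))
      ≤ edist (g u) (g v) := h1
    _ ≤ r * edist u v := hLip g hg u v
    _ ≤ r * hausdorffEdist (U : Set X) (V : Set X) := by
        gcongr
        rw [← hvd]
        exact infEdist_le_hausdorffEdist_of_mem hu

/-- for a nonempty compact family `G ⊆ C(X,Y)` (compact-open topology) of
Lipschitz maps with uniform bound `r`, the union map `U ↦ ⋃ g ∈ G, g '' U` is well defined
on nonempty compact subsets (values are nonempty compact) and is Lipschitz with constant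
at most `r` for the Hausdorff metrics. -/
theorem compact_family_union_map_lipschitz
    {X Y : Type*} [MetricSpace X] [MetricSpace Y] [CompleteSpace X] [CompleteSpace Y]
    (G : Set C(X, Y)) (hG : IsCompact G) (hGne : G.Nonempty)
    (r : NNReal) (hLip : ∀ g ∈ G, LipschitzWith r (g : X → Y)) :
    ∃ Φ : NonemptyCompacts X → NonemptyCompacts Y,
      (∀ U : NonemptyCompacts X,
        (Φ U : Set Y) = ⋃ g ∈ G, (g : X → Y) '' (U : Set X)) ∧
      LipschitzWith r Φ := by
  -- evaluation is continuous on G × X thanks to equi-Lipschitz bound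
  have heval : ContinuousOn (fun p : C(X, Y) × X => p.1 p.2) (G ×ˢ (Set.univ : Set X)) := by
    rintro ⟨g, u⟩ ⟨hg, -⟩
    unfold ContinuousWithinAt
    rw [Metric.tendsto_nhds]
    intro ε hε
    have hr1 : (0:ℝ) < r + 1 := by positivity
    set δ : ℝ := ε / (2 * (r + 1)) with hδdef
    have hδ : 0 < δ := by positivity
    have hWopen : IsOpen {g' : C(X, Y) | dist (g' u) (g u) < ε / 2} := by
      have : Continuous fun g' : C(X, Y) => g' u := continuous_eval_const u
      exact Metric.isOpen_ball.preimage this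
    have hW : {g' : C(X, Y) | dist (g' u) (g u) < ε / 2} ∈ nhds g :=
      hWopen.mem_nhds (by simp [hε])
    have hB : Metric.ball u δ ∈ nhds u := Metric.ball_mem_nhds u hδ
    filter_upwards [mem_nhdsWithin_of_mem_nhds (prod_mem_nhds hW hB),
      self_mem_nhdsWithin] with p hp hps
    obtain ⟨hg', hx⟩ := hp
    obtain ⟨hpG, -⟩ := hps
    calc dist (p.1 p.2) (g u) ≤ dist (p.1 p.2) (p.1 u) + dist (p.1 u) (g u) :=
          dist_triangle _ _ _
      _ < (r : ℝ) * δ + ε / 2 := by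
          refine add_lt_add_of_le_of_lt ?_ hg'
          calc dist (p.1 p.2) (p.1 u) ≤ (r : ℝ) * dist p.2 u := (hLip p.1 hpG).dist_le_mul _ _
            _ ≤ (r : ℝ) * δ := by
                apply mul_le_mul_of_nonneg_left (le_of_lt hx) r.coe_nonneg
      _ ≤ ε / 2 + ε / 2 := by
          have : (r : ℝ) * δ ≤ ε / 2 := by
            rw [hδdef]
            have h2 : ((r : ℝ) + 1) * (ε / (2 * ((r : ℝ) + 1))) = ε / 2 := by
              field_simp
            have h3 : (r : ℝ) * (ε / (2 * ((r : ℝ) + 1))) ≤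
                ((r : ℝ) + 1) * (ε / (2 * ((r : ℝ) + 1))) := by
              apply mul_le_mul_of_nonneg_right (by linarith) (by positivity)
            linarith
          linarith
      _ = ε := by ring
  have hkey : ∀ U : NonemptyCompacts X,
      (⋃ g ∈ G, (g : X → Y) '' (U : Set X)) =
        (fun p : C(X, Y) × X => p.1 p.2) '' (G ×ˢ (U : Set X)) := by
    intro U
    rw [Set.iUnion_image_left, ← Set.image_prod]
  have hcomp : ∀ U : NonemptyCompacts X, IsCompact (⋃ g ∈ G, (g : X → Y) '' (U : Set X)) := by
    intro U
    rw [hkey U]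
    exact (hG.prod U.isCompact).image_of_continuousOn
      (heval.mono (Set.prod_mono_right (Set.subset_univ _)))
  have hne : ∀ U : NonemptyCompacts X, (⋃ g ∈ G, (g : X → Y) '' (U : Set X)).Nonempty := by
    intro U
    obtain ⟨g, hg⟩ := hGne
    obtain ⟨u, hu⟩ := U.nonempty
    exact ⟨g u, Set.mem_iUnion₂.2 ⟨g, hg, Set.mem_image_of_mem _ hu⟩⟩
  refine ⟨fun U => ⟨⟨_, hcomp U⟩, hne U⟩, fun U => rfl, ?_⟩
  intro U V
  show EMetric.hausdorffEdist _ _ ≤ _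
  refine EMetric.hausdorffEdist_le_of_infEdist
    (union_map_infEdist_bound G r hLip U V) ?_
  have := union_map_infEdist_bound G r hLip V U
  rwa [EMetric.hausdorffEdist, Metric.hausdorffEDist_comm] at this
end

section
/- Let $G$ be a compact admissible family of contractions on a complete metric space $X$ with uniform Lipschitz bound $r<1$. Then there is a unique nonempty compact set $W \subseteq X$ satisfying $W = \bigcup_{g \in G} g(W)$, and for any nonempty compact $Z$, the iterates of the union map applied to $Z$ converge to $W$ in the Hausdorff metric. -/
open TopologicalSpace Filter

open EMetric Set Metric in
private lemma hutchinson_eval_continuousOn {X : Type*} [MetricSpace X]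
    {G : Set C(X, X)} {r : NNReal} (hLip : ∀ g ∈ G, LipschitzWith r (g : X → X)) :
    ContinuousOn (fun p : C(X, X) × X => p.1 p.2) (G ×ˢ (Set.univ : Set X)) := by
  rintro ⟨g, x⟩ ⟨hg, -⟩
  rw [ContinuousWithinAt, Metric.tendsto_nhds]
  intro ε hε
  set δ : ℝ := ε / 2 / (r + 1) with hδdef
  have hδ : (0 : ℝ) < δ := by positivity
  have hopen : IsOpen ({h : C(X, X) | dist (h x) (g x) < ε / 2} ×ˢ Metric.ball x δ) := by
    refine IsOpen.prod ?_ Metric.isOpen_ball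
    have : {h : C(X, X) | dist (h x) (g x) < ε / 2} =
        (fun h : C(X, X) => h x) ⁻¹' Metric.ball (g x) (ε / 2) := rfl
    rw [this]
    exact Metric.isOpen_ball.preimage (continuous_eval_const x)
  have hmem : (g, x) ∈ ({h : C(X, X) | dist (h x) (g x) < ε / 2} ×ˢ Metric.ball x δ) := by
    constructor
    · simp [half_pos hε]
    · simp [hδ]
  filter_upwards [mem_nhdsWithin_of_mem_nhds (hopen.mem_nhds hmem), self_mem_nhdsWithin]
    with p hp hpG
  obtain ⟨hp1, hp2⟩ := hp
  have hpG1 : p.1 ∈ G := hpG.1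
  have h1 : dist (p.1 p.2) (p.1 x) ≤ r * dist p.2 x := (hLip p.1 hpG1).dist_le_mul _ _
  have h2 : dist p.2 x < δ := hp2
  have hr0 : (0 : ℝ) ≤ r := r.coe_nonneg
  have hrδ : (r : ℝ) * δ ≤ ε / 2 := by
    have h := mul_le_mul_of_nonneg_right (by linarith : (r : ℝ) ≤ r + 1)
      (by positivity : (0:ℝ) ≤ ε / 2 / (r + 1))
    calc (r : ℝ) * δ ≤ (r + 1) * δ := by rw [hδdef]; exact h
      _ = ε / 2 := by rw [hδdef]; field_simp
  calc dist (p.1 p.2) (g x) ≤ dist (p.1 p.2) (p.1 x) + dist (p.1 x) (g x) := dist_triangle _ _ _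
    _ ≤ r * dist p.2 x + dist (p.1 x) (g x) := by linarith
    _ < r * δ + ε / 2 := by
        have : (r : ℝ) * dist p.2 x ≤ r * δ := mul_le_mul_of_nonneg_left h2.le hr0
        have h3 : dist (p.1 x) (g x) < ε / 2 := hp1
        linarith
    _ ≤ ε / 2 + ε / 2 := by linarith
    _ = ε := by ring

open EMetric Set in
private lemma hutchinson_infEdist_le {X : Type*} [MetricSpace X]
    {G : Set C(X, X)} {r : NNReal} (hLip : ∀ g ∈ G, LipschitzWith r (g : X → X))
    (U V : NonemptyCompacts X) :
    ∀ x ∈ ⋃ g ∈ G, (g : X → X) '' (U : Set X),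
      infEdist x (⋃ g ∈ G, (g : X → X) '' (V : Set X)) ≤
        r * hausdorffEdist (U : Set X) (V : Set X) := by
  intro x hx
  simp only [Set.mem_iUnion] at hx
  obtain ⟨g, hg, u, hu, rfl⟩ := hx
  obtain ⟨v, hv, hvinf⟩ := V.isCompact.exists_infEdist_eq_edist V.nonempty u
  calc infEdist ((g : X → X) u) (⋃ g ∈ G, (g : X → X) '' (V : Set X))
      ≤ edist ((g : X → X) u) ((g : X → X) v) := by
        apply infEdist_le_edist_of_mem
        exact Set.mem_iUnion₂.2 ⟨g, hg, Set.mem_image_of_mem _ hv⟩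
    _ ≤ r * edist u v := hLip g hg u v
    _ = r * infEdist u (V : Set X) := congrArg (fun t => (r : ENNReal) * t) hvinf.symm
    _ ≤ r * hausdorffEdist (U : Set X) (V : Set X) :=
        mul_le_mul_right (infEdist_le_hausdorffEdist_of_mem hu) _

/-- a compact admissible family `G` of contractions (uniform bound `r < 1`)
on a complete metric space has a unique nonempty compact attractor
`W = ⋃ g ∈ G, g '' W`, and the iterates of the union map applied to any nonempty compact
`Z` converge to `W` in the Hausdorff metric. -/
theorem hutchinson_compact_family
    {X : Type*} [MetricSpace X] [CompleteSpace X] [Nonempty X]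
    (G : Set C(X, X)) (hG : IsCompact G) (hGne : G.Nonempty)
    (r : NNReal) (hr : r < 1) (hLip : ∀ g ∈ G, LipschitzWith r (g : X → X)) :
    ∃ W : NonemptyCompacts X,
      ((W : Set X) = ⋃ g ∈ G, (g : X → X) '' (W : Set X)) ∧
      (∀ W' : NonemptyCompacts X,
        (W' : Set X) = ⋃ g ∈ G, (g : X → X) '' (W' : Set X) → W' = W) ∧
      (∀ Φ : NonemptyCompacts X → NonemptyCompacts X,
        (∀ U : NonemptyCompacts X,
          (Φ U : Set X) = ⋃ g ∈ G, (g : X → X) '' (U : Set X)) →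
        ∀ Z : NonemptyCompacts X,
          Tendsto (fun n => Φ^[n] Z) atTop (nhds W)) := by
  classical
  -- the union set is compact
  have himg : ∀ U : NonemptyCompacts X,
      (⋃ g ∈ G, (g : X → X) '' (U : Set X)) =
        (fun p : C(X, X) × X => p.1 p.2) '' (G ×ˢ (U : Set X)) := by
    intro U
    ext y
    simp only [Set.mem_iUnion, Set.mem_image, Set.mem_prod, Prod.exists]
    constructor
    · rintro ⟨g, hg, x, hx, rfl⟩; exact ⟨g, x, ⟨hg, hx⟩, rfl⟩
    · rintro ⟨g, x, ⟨hg, hx⟩, rfl⟩; exact ⟨g, hg, x, hx, rfl⟩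
  have hcompact : ∀ U : NonemptyCompacts X,
      IsCompact (⋃ g ∈ G, (g : X → X) '' (U : Set X)) := by
    intro U
    rw [himg U]
    exact (hG.prod U.isCompact).image_of_continuousOn
      ((hutchinson_eval_continuousOn hLip).mono
        (Set.prod_mono Set.Subset.rfl (Set.subset_univ _)))
  have hne : ∀ U : NonemptyCompacts X,
      (⋃ g ∈ G, (g : X → X) '' (U : Set X)).Nonempty := by
    intro U
    obtain ⟨g, hg⟩ := hGne
    obtain ⟨x, hx⟩ := U.nonempty
    exact ⟨g x, Set.mem_iUnion₂.2 ⟨g, hg, Set.mem_image_of_mem _ hx⟩⟩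
  set Φ₀ : NonemptyCompacts X → NonemptyCompacts X := fun U =>
    ⟨⟨⋃ g ∈ G, (g : X → X) '' (U : Set X), hcompact U⟩, hne U⟩ with hΦ₀
  have hΦ₀coe : ∀ U : NonemptyCompacts X,
      (Φ₀ U : Set X) = ⋃ g ∈ G, (g : X → X) '' (U : Set X) := fun U => rfl
  -- Φ₀ is Lipschitz with constant r
  have hlip : LipschitzWith r Φ₀ := by
    intro U V
    have : edist (Φ₀ U) (Φ₀ V) =
        EMetric.hausdorffEdist (Φ₀ U : Set X) (Φ₀ V : Set X) := rfl
    rw [this]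
    have hedist : edist U V = EMetric.hausdorffEdist (U : Set X) (V : Set X) := rfl
    rw [hedist]
    refine EMetric.hausdorffEdist_le_of_infEdist ?_ ?_
    · exact hutchinson_infEdist_le hLip U V
    · intro x hx
      have := hutchinson_infEdist_le hLip V U x hx
      exact this.trans_eq (congrArg (fun t => (r : ENNReal) * t) EMetric.hausdorffEdist_comm)
  have hcontr : ContractingWith r Φ₀ := ⟨hr, hlip⟩
  have : Nonempty (NonemptyCompacts X) :=
    ⟨⟨⟨{Classical.arbitrary X}, isCompact_singleton⟩, Set.singleton_nonempty _⟩⟩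
  refine ⟨hcontr.fixedPoint Φ₀, ?_, ?_, ?_⟩
  · have hfix : Φ₀ (hcontr.fixedPoint Φ₀) = hcontr.fixedPoint Φ₀ :=
      hcontr.fixedPoint_isFixedPt
    conv_lhs => rw [← hfix]
    exact hΦ₀coe _
  · intro W' hW'
    exact hcontr.fixedPoint_unique (NonemptyCompacts.ext hW'.symm)
  · intro Φ hΦ Z
    have : Φ = Φ₀ := by
      funext U
      exact NonemptyCompacts.ext ((hΦ U).trans (hΦ₀coe U).symm)
    rw [this]
    exact hcontr.tendsto_iterate_fixedPoint Z
end

section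
/- Let $(X_1,d_1),\dots,(X_n,d_n)$ be complete metric spaces and for each pair $(i,j)$ let $F_{ij}$ be a (possibly empty) compact admissible family of contractions $X_j \to X_i$ with uniform Lipschitz bound $r<1$, such that for each $i$ some $F_{ij}$ is nonempty. Then the multi-component union map $(U_1,\dots,U_n)\mapsto\big(\bigcup_j\bigcup_{f\in F_{1j}} f(U_j),\dots,\bigcup_j\bigcup_{f\in F_{nj}} f(U_j)\big)$ on nonempty compact sets is a contraction with constant at most $r$ for the sup-Hausdorff metric, and hence there exist unique nonempty compact sets $W_1,\dots,W_n$ with $W_i = \bigcup_{j=1}^n \bigcup_{f\in F_{ij}} f(W_j)$ for all $i$. -/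
open TopologicalSpace Metric EMetric Set Function ENNReal

/-- multi-component Hutchinson principle.  Given complete metric spaces
`X 1, …, X n` coupled by compact families `F i j` of contractions `X j → X i` with a
uniform Lipschitz bound `r < 1`, such that for each `i` some `F i j` is nonempty, the
multi-component union map on tuples of nonempty compact sets is well defined, is a
contraction with constant at most `r` for the sup-Hausdorff metric, and there is a unique
tuple of nonempty compact sets `W i` with `W i = ⋃ j ⋃ f ∈ F i j, f '' (W j)`. -/
theorem multi_component_hutchinson
    {n : ℕ} (X : Fin n → Type*)
    [∀ i, MetricSpace (X i)] [∀ i, CompleteSpace (X i)] [∀ i, Nonempty (X i)]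
    (F : ∀ i j : Fin n, Set C(X j, X i))
    (hFcpt : ∀ i j, IsCompact (F i j))
    (r : NNReal) (hr : r < 1)
    (hLip : ∀ i j, ∀ f ∈ F i j, LipschitzWith r (f : X j → X i))
    (hne : ∀ i, ∃ j, (F i j).Nonempty) :
    ∃ Φ : (∀ i, NonemptyCompacts (X i)) → (∀ i, NonemptyCompacts (X i)),
      (∀ U i, (Φ U i : Set (X i)) =
          ⋃ j, ⋃ f ∈ F i j, (f : X j → X i) '' (U j : Set (X j))) ∧
      (∀ U V, (⨆ i, dist (Φ U i) (Φ V i)) ≤ r * ⨆ i, dist (U i) (V i)) ∧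
      (∃! W : ∀ i, NonemptyCompacts (X i),
        ∀ i, (W i : Set (X i)) =
          ⋃ j, ⋃ f ∈ F i j, (f : X j → X i) '' (W j : Set (X j))) := by
  classical
  set S : (∀ i, NonemptyCompacts (X i)) → ∀ i, Set (X i) :=
    fun U i => ⋃ j, ⋃ f ∈ F i j, (f : X j → X i) '' (U j : Set (X j)) with hSdef
  -- compactness of each component of the union map
  have hScpt : ∀ U i, IsCompact (S U i) := by
    intro U i
    apply isCompact_iUnion
    intro j
    have himg : (⋃ f ∈ F i j, (f : X j → X i) '' (U j : Set (X j)))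
        = (fun p : C(X j, X i) × X j => p.1 p.2) '' (F i j ×ˢ (U j : Set (X j))) := by
      ext x
      simp only [mem_iUnion, mem_image, mem_prod, Prod.exists]
      constructor
      · rintro ⟨f, hf, a, ha, rfl⟩; exact ⟨f, a, ⟨hf, ha⟩, rfl⟩
      · rintro ⟨f, a, ⟨hf, ha⟩, rfl⟩; exact ⟨f, hf, a, ha, rfl⟩
    rw [himg]
    apply IsCompact.image_of_continuousOn ((hFcpt i j).prod (U j).isCompact)
    rintro ⟨f, a⟩ ⟨hf, -⟩
    rw [ContinuousWithinAt, Metric.tendsto_nhds]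
    intro ε hε
    set δ : ℝ := ε / 2 / ((r : ℝ) + 1) with hδdef
    have hδ : 0 < δ := by positivity
    have hmem : ((fun g : C(X j, X i) => g a) ⁻¹' Metric.ball (f a) (ε / 2)) ×ˢ
        Metric.ball a δ ∈ nhds (f, a) := by
      apply prod_mem_nhds
      · exact (continuous_eval_const a).continuousAt.preimage_mem_nhds
          (Metric.ball_mem_nhds _ (half_pos hε))
      · exact Metric.ball_mem_nhds _ hδ
    filter_upwards [Filter.inter_mem self_mem_nhdsWithin
      (mem_nhdsWithin_of_mem_nhds hmem)]
    rintro ⟨g, b⟩ ⟨⟨hg, -⟩, hg2, hb⟩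
    simp only [Set.mem_preimage, Metric.mem_ball] at hg2 hb
    have h1 : dist (g b) (g a) ≤ (r : ℝ) * δ := by
      calc dist (g b) (g a) ≤ (r : ℝ) * dist b a := (hLip i j g hg).dist_le_mul b a
        _ ≤ (r : ℝ) * δ := by
            exact mul_le_mul_of_nonneg_left hb.le r.coe_nonneg
    have h2 : (r : ℝ) * δ ≤ ε / 2 := by
      rw [hδdef, mul_div_assoc', div_le_iff₀ (by positivity : (0:ℝ) < (r : ℝ) + 1)]
      nlinarith [r.coe_nonneg, half_pos hε]
    calc dist (g b) (f a) ≤ dist (g b) (g a) + dist (g a) (f a) := dist_triangle _ _ _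
      _ < (r : ℝ) * δ + ε / 2 := add_lt_add_of_le_of_lt h1 hg2
      _ ≤ ε / 2 + ε / 2 := by linarith
      _ = ε := by ring
  -- nonemptiness
  have hSne : ∀ U i, (S U i).Nonempty := by
    intro U i
    obtain ⟨j, f, hf⟩ := hne i
    obtain ⟨a, ha⟩ := (U j).nonempty
    exact ⟨f a, mem_iUnion.2 ⟨j, mem_iUnion₂.2 ⟨f, hf, mem_image_of_mem _ ha⟩⟩⟩
  set Φ : (∀ i, NonemptyCompacts (X i)) → (∀ i, NonemptyCompacts (X i)) :=
    fun U i => ⟨⟨S U i, hScpt U i⟩, hSne U i⟩ with hΦdef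
  have hΦcoe : ∀ U i, (Φ U i : Set (X i)) = S U i := fun U i => rfl
  -- key Hausdorff edist estimate
  have half : ∀ (U V : ∀ i, NonemptyCompacts (X i)) (i : Fin n),
      ∀ x ∈ S U i, ∃ y ∈ S V i, edist x y ≤ (r : ℝ≥0∞) * edist U V := by
    intro U V i x hx
    simp only [hSdef, mem_iUnion, mem_image] at hx
    obtain ⟨j, f, hf, a, ha, rfl⟩ := hx
    obtain ⟨b, hb, hab⟩ := (V j).isCompact.exists_infEdist_eq_edist (V j).nonempty a
    refine ⟨f b, mem_iUnion.2 ⟨j, mem_iUnion₂.2 ⟨f, hf, mem_image_of_mem _ hb⟩⟩, ?_⟩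
    calc edist (f a) (f b) ≤ (r : ℝ≥0∞) * edist a b := hLip i j f hf a b
      _ ≤ (r : ℝ≥0∞) * edist U V := by
          apply mul_le_mul_right
          calc edist a b = infEdist a (V j : Set (X j)) := hab.symm
            _ ≤ hausdorffEdist (U j : Set (X j)) (V j : Set (X j)) :=
                infEdist_le_hausdorffEdist_of_mem ha
            _ = edist (U j) (V j) := rfl
            _ ≤ edist U V := edist_le_pi_edist U V j
  have hΦlip : LipschitzWith r Φ := by
    intro U V
    rw [edist_pi_def]
    apply Finset.sup_le
    intro i _
    show hausdorffEdist (S U i) (S V i) ≤ (r : ℝ≥0∞) * edist U V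
    apply hausdorffEdist_le_of_mem_edist (half U V i)
    intro x hx
    obtain ⟨y, hy, hxy⟩ := half V U i x hx
    rw [edist_comm V U] at hxy
    exact ⟨y, hy, hxy⟩
  have hC : ContractingWith r Φ := ⟨hr, hΦlip⟩
  refine ⟨Φ, fun U i => rfl, ?_, ?_⟩
  · -- sup-dist contraction estimate
    intro U V
    have hs0 : (0 : ℝ) ≤ ⨆ i, dist (U i) (V i) := Real.iSup_nonneg fun i => dist_nonneg
    apply Real.iSup_le _ (mul_nonneg r.coe_nonneg hs0)
    intro i
    have h1 : dist (Φ U i) (Φ V i) ≤ dist (Φ U) (Φ V) := dist_le_pi_dist _ _ i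
    have h2 : dist (Φ U) (Φ V) ≤ (r : ℝ) * dist U V := hΦlip.dist_le_mul U V
    have h3 : dist U V ≤ ⨆ i, dist (U i) (V i) := by
      rw [dist_pi_le_iff hs0]
      intro j
      exact le_ciSup (f := fun k => dist (U k) (V k)) (Set.Finite.bddAbove (Set.finite_range _)) j
    calc dist (Φ U i) (Φ V i) ≤ (r : ℝ) * dist U V := h1.trans h2
      _ ≤ (r : ℝ) * ⨆ i, dist (U i) (V i) :=
          mul_le_mul_of_nonneg_left h3 r.coe_nonneg
  · -- existence and uniqueness of the fixed tuple
    have : ∀ i, Nonempty (NonemptyCompacts (X i)) := fun i =>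
      ⟨⟨⟨{Classical.arbitrary (X i)}, isCompact_singleton⟩, Set.singleton_nonempty _⟩⟩
    refine ⟨ContractingWith.fixedPoint Φ hC, ?_, ?_⟩
    · intro i
      conv_lhs => rw [← hC.fixedPoint_isFixedPt]
      rfl
    · intro W hW
      apply hC.fixedPoint_unique
      funext i
      exact NonemptyCompacts.ext (hW i).symm
end
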